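/- For every integer n ≥ 1, if W satisfies the minimal constraints and W·ln W and the powers W^k for 1 ≤ k ≤ n+1 are integrable, then the Wigner entropy obeys the hierarchy bound S[W] ≥ ln π + ∑_{k=1}^{n} (1/k) · ∫ W(q,p) · (1 − π·W(q,p))^k dq dp, where every summand on the right-hand side is nonnegative. -/

import Mathlib

/-!
Pointwise, `-w log(πw) = w · (-log(1 - (1 - πw))) = ∑_{k ≥ 1} w (1 - πw)^k / k`, a series of
nonnegative terms because `0 ≤ 1 - πw ≤ 1`; so each partial sum is below `-w log π - w log w`.
Integrating against `W` and using `∫ W = 1` gives the bound.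
-/

open Real MeasureTheory Finset

theorem sum_Icc_pow_div_le_neg_log_one_sub (n : ℕ) {y : ℝ} (hy₀ : 0 ≤ y) (hy₁ : y < 1) :
    ∑ k ∈ Icc 1 n, y ^ k / k ≤ -log (1 - y) := by
  have hseries := hasSum_pow_div_log_of_abs_lt_one (abs_lt.2 ⟨by linarith, hy₁⟩)
  calc ∑ k ∈ Icc 1 n, y ^ k / k = ∑ i ∈ range n, y ^ (i + 1) / ((i + 1 : ℕ) : ℝ) := by
        rw [range_eq_Ico, sum_Ico_add' (fun k : ℕ => y ^ k / k), zero_add,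
          Ico_add_one_right_eq_Icc]
    _ = ∑ i ∈ range n, y ^ (i + 1) / (i + 1) := by push_cast; rfl
    _ ≤ -log (1 - y) := sum_le_hasSum _ (fun i _ => by positivity) hseries

theorem sum_one_div_mul_mul_one_sub_mul_pow_le (n : ℕ) {c w : ℝ} (hc : 0 < c) (hw : 0 ≤ w)
    (hcw : c * w ≤ 1) :
    ∑ k ∈ Icc 1 n, 1 / (k : ℝ) * (w * (1 - c * w) ^ k) ≤ -(w * log w) - log c * w := by
  rcases hw.eq_or_lt with rfl | hw
  · simp
  have hlog := sum_Icc_pow_div_le_neg_log_one_sub n (y := 1 - c * w) (by linarith)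
    (by nlinarith)
  rw [sub_sub_cancel, log_mul hc.ne' hw.ne'] at hlog
  calc ∑ k ∈ Icc 1 n, 1 / (k : ℝ) * (w * (1 - c * w) ^ k)
      = w * ∑ k ∈ Icc 1 n, (1 - c * w) ^ k / k := by
        rw [mul_sum]; exact sum_congr rfl fun k _ => by ring
    _ ≤ w * -(log c + log w) := mul_le_mul_of_nonneg_left hlog hw.le
    _ = -(w * log w) - log c * w := by ring

section

variable {α : Type*} [MeasurableSpace α] {μ : Measure α} {f : α → ℝ} {c : ℝ}

theorem MeasureTheory.Integrable.mul_one_sub_mul_pow (hf : Integrable f μ) (hc : 0 ≤ c)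
    (hf₀ : ∀ x, 0 ≤ f x) (hcf : ∀ x, c * f x ≤ 1) (k : ℕ) :
    Integrable (fun x => f x * (1 - c * f x) ^ k) μ := by
  refine hf.mul_bdd (c := 1) ((aestronglyMeasurable_const.sub (hf.1.const_mul c)).pow k)
    (ae_of_all _ fun x => ?_)
  have h₀ : 0 ≤ 1 - c * f x := by linarith [hcf x]
  have h₁ : 1 - c * f x ≤ 1 := by linarith [mul_nonneg hc (hf₀ x)]
  rw [norm_pow, Real.norm_of_nonneg h₀]
  exact pow_le_one₀ h₀ h₁

theorem sum_one_div_mul_integral_le (n : ℕ) (hf : Integrable f μ)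
    (hflog : Integrable (fun x => f x * log (f x)) μ) (hc : 0 < c) (hf₀ : ∀ x, 0 ≤ f x)
    (hcf : ∀ x, c * f x ≤ 1) :
    ∑ k ∈ Icc 1 n, 1 / (k : ℝ) * ∫ x, f x * (1 - c * f x) ^ k ∂μ
      ≤ -∫ x, f x * log (f x) ∂μ - log c * ∫ x, f x ∂μ := by
  have hterm k := (hf.mul_one_sub_mul_pow hc.le hf₀ hcf k).const_mul (1 / (k : ℝ))
  calc ∑ k ∈ Icc 1 n, 1 / (k : ℝ) * ∫ x, f x * (1 - c * f x) ^ k ∂μ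
      = ∫ x, ∑ k ∈ Icc 1 n, 1 / (k : ℝ) * (f x * (1 - c * f x) ^ k) ∂μ := by
        rw [integral_finsetSum _ fun k _ => hterm k]
        exact sum_congr rfl fun k _ => (integral_const_mul _ _).symm
    _ ≤ ∫ x, -(f x * log (f x)) - log c * f x ∂μ :=
        integral_mono (integrable_finsetSum _ fun k _ => hterm k)
          (hflog.fun_neg.sub (hf.const_mul _))
          fun x => sum_one_div_mul_mul_one_sub_mul_pow_le n hc (hf₀ x) (hcf x)
    _ = -∫ x, f x * log (f x) ∂μ - log c * ∫ x, f x ∂μ := by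
        rw [integral_sub hflog.fun_neg (hf.const_mul _), integral_neg, integral_const_mul]

end

theorem wigner_entropy_hierarchy (n : ℕ)
    (W : ℝ × ℝ → ℝ)
    (hpos : ∀ z, 0 ≤ W z)
    (hnorm : ∫ z, W z = 1)
    (hbound : ∀ z, Real.pi * W z ≤ 1)
    (hlog : Integrable (fun z => W z * Real.log (W z)))
    (hpow : ∀ k : ℕ, 1 ≤ k → k ≤ n + 1 → Integrable (fun z => (W z) ^ k)) :
    (-∫ z, W z * Real.log (W z))
      ≥ Real.log Real.pi
        + ∑ k ∈ Finset.Icc 1 n, (1 / (k : ℝ)) * ∫ z, W z * (1 - Real.pi * W z) ^ k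
    ∧ ∀ k ∈ Finset.Icc 1 n,
        0 ≤ (1 / (k : ℝ)) * ∫ z, W z * (1 - Real.pi * W z) ^ k := by
  have hW : Integrable W := by simpa using hpow 1 le_rfl (by omega)
  refine ⟨?_, fun k _ => ?_⟩
  · have hsum := sum_one_div_mul_integral_le n hW hlog pi_pos hpos hbound
    rw [hnorm] at hsum
    linarith
  · have h₀ z : 0 ≤ 1 - π * W z := by linarith [hbound z]
    exact mul_nonneg (by positivity)
      (integral_nonneg fun z => mul_nonneg (hpos z) (pow_nonneg (h₀ z) k))
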